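/- arXiv:2604.25260 — 2 statements merged into one kernel-verified Lean document; each statement's English description precedes it below -/
import Mathlib

section
/- With the same setup, the dual basis elements satisfy b_σ · b_{nρ} = b_{(n)ρ+σ}, i.e., (y)∨ · (eⁿ)∨ = (eⁿ y)∨, where the product is the Pontryagin product dual to Δ with Δ(e) and Δ(y) primitive. -/
/-- The coefficient ring `𝔽₂[a, u]` of `H𝔽₂_⋆`. -/
abbrev KRing : Type := MvPolynomial (Fin 2) (ZMod 2)

/-- `B = 𝔽₂[a,u]⟨eⁿ, eⁿy : n ≥ 0⟩`, the free module on the basis of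
`𝔽₂[a,u][e][y]/(y² − ay − ue)`: `(n, false)` stands for `eⁿ` and `(n, true)` for `eⁿy`. -/
abbrev BMod : Type := (ℕ × Bool) →₀ KRing

/-- The coefficient of the basis element `b₁ ⊗ b₂` in `Δ(x)`, where `Δ` is the algebra map
with `Δ(e) = e⊗1 + 1⊗e` and `Δ(y) = y⊗1 + 1⊗y`: over `𝔽₂`,
`Δ(eᵏ) = Σᵢ C(k,i) eⁱ ⊗ e^{k−i}` and `Δ(eᵏy) = Σᵢ C(k,i) (eⁱy ⊗ e^{k−i} + eⁱ ⊗ e^{k−i}y)`. -/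
noncomputable def deltaCoeff : ℕ × Bool → ℕ × Bool → ℕ × Bool → KRing
  | (k, false), (i, bi), (j, bj) =>
      if bi = false ∧ bj = false ∧ i + j = k then (Nat.choose k i : KRing) else 0
  | (k, true), (i, bi), (j, bj) =>
      if i + j = k ∧ bi ≠ bj then (Nat.choose k i : KRing) else 0

/-- The Pontryagin product of the dual basis functionals indexed by `f` and `g`:
`(f∨ · g∨)(x) = (f∨ ⊗ g∨)(Δ(x))`, as a linear functional on `B`. -/
noncomputable def pontryaginMul (f g : ℕ × Bool) : BMod →ₗ[KRing] KRing :=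
  Finsupp.lsum KRing fun x => deltaCoeff x f g • (LinearMap.id : KRing →ₗ[KRing] KRing)

/-- `b_σ · b_{nρ} = b_{nρ+σ}`: the Pontryagin product `(y)∨ · (eⁿ)∨` equals the dual
basis functional `(eⁿy)∨` (given by `Finsupp.lapply (n, true)`). -/
theorem dual_sigma_mul_eq_dual (n : ℕ) :
    pontryaginMul (0, true) (n, false) = Finsupp.lapply (n, true) := by
  apply Finsupp.lhom_ext
  rintro ⟨k, b⟩ c
  cases b <;>
    simp [pontryaginMul, deltaCoeff, Finsupp.lapply, Prod.ext_iff, eq_comm]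
  rcases eq_or_ne n k with h | h
  · subst h; simp
  · simp [Finsupp.single_apply, h, Prod.ext_iff]
end

section
/- In the polynomial ring F = 𝔽₂[a^{±1}][u][v] (modeling E₂ of the slice spectral sequence for kℝ^Φ), the 𝔽₂-linear derivation d determined by d(u) = a³v, d(a) = 0, d(v) = 0 (extended by the Leibniz rule) satisfies d∘d = 0, and the homology ker(d)/im(d) is isomorphic to 𝔽₂[a^{±1}][u²] ⊕ (v-divisible part killed), i.e., H(F, d) ≅ 𝔽₂[a^{±1}][u²]. -/
/-- `F = 𝔽₂[a^{±1}][u][v]`, realized as the monoid algebra of `ℤ × ℕ × ℕ` over `𝔽₂`: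
the basis element `(i, m, n)` stands for the monomial `aⁱ uᵐ vⁿ`. -/
abbrev FRing : Type := AddMonoidAlgebra (ZMod 2) (ℤ × ℕ × ℕ)

/-- The `𝔽₂`-linear derivation on `F` determined by `d(u) = a³v`, `d(a) = 0`, `d(v) = 0`
and the Leibniz rule: on monomials, `d(aⁱ uᵐ vⁿ) = m · a^{i+3} u^{m−1} v^{n+1}`. -/
noncomputable def dPhi : FRing →ₗ[ZMod 2] FRing :=
  (AddMonoidAlgebra.coeffLinearEquiv (ZMod 2)).symm.toLinearMap ∘ₗ
    (Finsupp.lsum (ZMod 2) fun x : ℤ × ℕ × ℕ =>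
      (x.2.1 : ZMod 2) • Finsupp.lsingle (x.1 + 3, x.2.1 - 1, x.2.2 + 1)) ∘ₗ
    (AddMonoidAlgebra.coeffLinearEquiv (ZMod 2)).toLinearMap

/-- `𝔽₂[a^{±1}][u²]`, realized as the free module on `ℤ × ℕ`: `(i, k)` stands for `aⁱ u^{2k}`. -/
abbrev HTarget : Type := AddMonoidAlgebra (ZMod 2) (ℤ × ℕ)

/-- Projection onto the subspace spanned by monomials `aⁱ u^{2k} v⁰`. -/
noncomputable def piPhi : FRing →ₗ[ZMod 2] HTarget :=
  (AddMonoidAlgebra.coeffLinearEquiv (ZMod 2)).symm.toLinearMap ∘ₗ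
  (Finsupp.lsum (ZMod 2) fun x : ℤ × ℕ × ℕ =>
    if x.2.1 % 2 = 0 ∧ x.2.2 = 0 then Finsupp.lsingle (x.1, x.2.1 / 2) else 0) ∘ₗ
    (AddMonoidAlgebra.coeffLinearEquiv (ZMod 2)).toLinearMap

/-- Section: `(i, k) ↦ aⁱ u^{2k} v⁰`. -/
noncomputable def sPhi : HTarget →ₗ[ZMod 2] FRing :=
  (AddMonoidAlgebra.coeffLinearEquiv (ZMod 2)).symm.toLinearMap ∘ₗ
  (Finsupp.lsum (ZMod 2) fun y : ℤ × ℕ => Finsupp.lsingle (y.1, 2 * y.2, 0)) ∘ₗ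
    (AddMonoidAlgebra.coeffLinearEquiv (ZMod 2)).toLinearMap

/-- Contracting homotopy: `aⁱ uᵐ vⁿ ↦ a^{i-3} u^{m+1} v^{n-1}` for `m` even, `n ≥ 1`. -/
noncomputable def hPhi : FRing →ₗ[ZMod 2] FRing :=
  (AddMonoidAlgebra.coeffLinearEquiv (ZMod 2)).symm.toLinearMap ∘ₗ
  (Finsupp.lsum (ZMod 2) fun x : ℤ × ℕ × ℕ =>
    if x.2.1 % 2 = 0 ∧ x.2.2 ≠ 0 then Finsupp.lsingle (x.1 - 3, x.2.1 + 1, x.2.2 - 1) else 0) ∘ₗ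
    (AddMonoidAlgebra.coeffLinearEquiv (ZMod 2)).toLinearMap

@[simp] lemma dPhi_single (x : ℤ × ℕ × ℕ) (c : ZMod 2) :
    dPhi (AddMonoidAlgebra.single x c) =
      AddMonoidAlgebra.single (x.1 + 3, x.2.1 - 1, x.2.2 + 1) ((x.2.1 : ZMod 2) * c) := by
  show AddMonoidAlgebra.ofCoeff _ = _
  erw [Finsupp.lsum_single (S := ZMod 2), LinearMap.smul_apply, Finsupp.lsingle_apply,
    Finsupp.smul_single, smul_eq_mul]
  rfl

@[simp] lemma piPhi_single (x : ℤ × ℕ × ℕ) (c : ZMod 2) :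
    piPhi (AddMonoidAlgebra.single x c) =
      if x.2.1 % 2 = 0 ∧ x.2.2 = 0 then AddMonoidAlgebra.single (x.1, x.2.1 / 2) c else 0 := by
  show AddMonoidAlgebra.ofCoeff _ = _
  erw [Finsupp.lsum_single (S := ZMod 2)]
  split
  · erw [Finsupp.lsingle_apply]; rfl
  · rfl

@[simp] lemma sPhi_single (y : ℤ × ℕ) (c : ZMod 2) :
    sPhi (AddMonoidAlgebra.single y c) = AddMonoidAlgebra.single (y.1, 2 * y.2, 0) c := by
  show AddMonoidAlgebra.ofCoeff _ = _
  erw [Finsupp.lsum_single (S := ZMod 2), Finsupp.lsingle_apply]; rfl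

@[simp] lemma hPhi_single (x : ℤ × ℕ × ℕ) (c : ZMod 2) :
    hPhi (AddMonoidAlgebra.single x c) =
      if x.2.1 % 2 = 0 ∧ x.2.2 ≠ 0 then AddMonoidAlgebra.single (x.1 - 3, x.2.1 + 1, x.2.2 - 1) c
      else 0 := by
  show AddMonoidAlgebra.ofCoeff _ = _
  erw [Finsupp.lsum_single (S := ZMod 2)]
  split
  · erw [Finsupp.lsingle_apply]; rfl
  · rfl

lemma cast_zmod2 (m : ℕ) : (m : ZMod 2) = ((m % 2 : ℕ) : ZMod 2) := by
  rw [ZMod.natCast_mod]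

lemma dPhi_dPhi (x : FRing) : dPhi (dPhi x) = 0 := by
  induction x using AddMonoidAlgebra.induction_linear with
  | zero => simp
  | add f g hf hg => rw [map_add, map_add, hf, hg, add_zero]
  | single a b =>
    obtain ⟨i, m, n⟩ := a
    rcases Nat.even_or_odd m with h | h
    · have hc : (m : ZMod 2) = 0 := by rw [cast_zmod2, Nat.even_iff.mp h]; simp
      rw [dPhi_single]
      simp only [hc, zero_mul, AddMonoidAlgebra.single_zero, map_zero]
    · have h1 : (m - 1) % 2 = 0 := by have := Nat.odd_iff.mp h; omega
      have hc : ((m - 1 : ℕ) : ZMod 2) = 0 := by rw [cast_zmod2, h1]; simp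
      rw [dPhi_single, dPhi_single]
      simp only [hc, zero_mul, AddMonoidAlgebra.single_zero]

lemma piPhi_dPhi (x : FRing) : piPhi (dPhi x) = 0 := by
  induction x using AddMonoidAlgebra.induction_linear with
  | zero => simp
  | add f g hf hg => rw [map_add, map_add, hf, hg, add_zero]
  | single a b =>
    obtain ⟨i, m, n⟩ := a
    rw [dPhi_single, piPhi_single, if_neg (by simp)]

lemma dPhi_sPhi (y : HTarget) : dPhi (sPhi y) = 0 := by
  induction y using AddMonoidAlgebra.induction_linear with
  | zero => simp
  | add f g hf hg => rw [map_add, map_add, hf, hg, add_zero]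
  | single a b =>
    obtain ⟨i, k⟩ := a
    have h2 : ((2 * k : ℕ) : ZMod 2) = 0 := by rw [cast_zmod2]; simp
    rw [sPhi_single, dPhi_single]
    simp only [h2, zero_mul, AddMonoidAlgebra.single_zero]

lemma piPhi_sPhi (y : HTarget) : piPhi (sPhi y) = y := by
  induction y using AddMonoidAlgebra.induction_linear with
  | zero => simp
  | add f g hf hg => rw [map_add, map_add, hf, hg]
  | single a b =>
    obtain ⟨i, k⟩ := a
    rw [sPhi_single, piPhi_single, if_pos ⟨Nat.mul_mod_right 2 k, rfl⟩]
    norm_num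

lemma homotopy (x : FRing) :
    dPhi (hPhi x) + hPhi (dPhi x) + sPhi (piPhi x) = x := by
  induction x using AddMonoidAlgebra.induction_linear with
  | zero => simp
  | add f g hf hg =>
    rw [map_add, map_add, map_add, map_add, map_add, map_add]
    rw [show ∀ a b c d e f : FRing, a + b + (c + d) + (e + f) = (a + c + e) + (b + d + f) from
      fun _ _ _ _ _ _ => by abel, hf, hg]
  | single a c =>
    obtain ⟨i, m, n⟩ := a
    rcases Nat.even_or_odd m with h | h
    · have hm : m % 2 = 0 := Nat.even_iff.mp h
      have hc : (m : ZMod 2) = 0 := by rw [cast_zmod2, hm]; simp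
      rcases Nat.eq_zero_or_pos n with hn | hn
      · subst hn
        rw [hPhi_single, if_neg (by simp), map_zero, dPhi_single]
        rw [piPhi_single, if_pos ⟨hm, rfl⟩, sPhi_single]
        simp only [hc, zero_mul, AddMonoidAlgebra.single_zero, map_zero,
          Nat.two_mul_div_two_of_even h, zero_add]
      · have hn' : n ≠ 0 := hn.ne'
        have h2 : (m + 1) % 2 = 1 := by omega
        have hc2 : ((m + 1 : ℕ) : ZMod 2) = 1 := by rw [cast_zmod2, h2]; simp
        rw [hPhi_single, if_pos ⟨hm, hn'⟩, dPhi_single, dPhi_single]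
        rw [piPhi_single, if_neg (by simp [hn']), map_zero]
        simp only [hc, hc2, zero_mul, one_mul, AddMonoidAlgebra.single_zero, map_zero, add_zero]
        norm_num [Nat.sub_add_cancel hn]
    · have hm : m % 2 = 1 := Nat.odd_iff.mp h
      have h1 : (m - 1) % 2 = 0 := by omega
      have hc1 : (m : ZMod 2) = 1 := by rw [cast_zmod2, hm]; simp
      have hm1 : 1 ≤ m := by omega
      rw [hPhi_single, if_neg (by simp [hm]), map_zero, dPhi_single]
      simp only [hc1, one_mul]
      rw [hPhi_single, if_pos ⟨h1, Nat.succ_ne_zero n⟩]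
      rw [piPhi_single, if_neg (by simp [hm]), map_zero, add_zero, zero_add]
      norm_num [Nat.sub_add_cancel hm1]

/-- `d ∘ d = 0`, and the homology `ker(d)/im(d)` of `(F, d)` is isomorphic to
`𝔽₂[a^{±1}][u²]`: this computes `SliceSS(kℝ^Φ)` collapsing to `kℝ^Φ_⋆ ≅ 𝔽₂[a^{±1}][u_{4σ}]`. -/
theorem dPhi_squared_zero_and_homology :
    dPhi ∘ₗ dPhi = 0 ∧
      Nonempty
        ((LinearMap.ker dPhi ⧸
            Submodule.comap (LinearMap.ker dPhi).subtype (LinearMap.range dPhi))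
          ≃ₗ[ZMod 2] HTarget) := by
  constructor
  · exact LinearMap.ext fun x => dPhi_dPhi x
  · set K := LinearMap.ker dPhi
    set f : K →ₗ[ZMod 2] HTarget := piPhi ∘ₗ K.subtype with hf
    have hsurj : Function.Surjective f := by
      intro y
      refine ⟨⟨sPhi y, ?_⟩, ?_⟩
      · exact LinearMap.mem_ker.mpr (dPhi_sPhi y)
      · simpa [hf] using piPhi_sPhi y
    have hker : LinearMap.ker f =
        Submodule.comap K.subtype (LinearMap.range dPhi) := by
      ext ⟨x, hx⟩
      have hx' : dPhi x = 0 := LinearMap.mem_ker.mp hx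
      simp only [LinearMap.mem_ker, hf, LinearMap.coe_comp, Function.comp_apply,
        Submodule.coe_subtype, Submodule.mem_comap, LinearMap.mem_range]
      constructor
      · intro hpi
        refine ⟨hPhi x, ?_⟩
        have := homotopy x
        rw [hx', hpi, map_zero, map_zero, add_zero, add_zero] at this
        exact this
      · rintro ⟨y, rfl⟩
        exact piPhi_dPhi y
    exact ⟨(Submodule.quotEquivOfEq _ _ hker.symm).trans
      (f.quotKerEquivOfSurjective hsurj)⟩
end
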